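/- Let P be a right LCM monoid, and p, q, r ∈ P with r = qk. Then the idempotent [r,r] is fixed by [p,q] in the associated inverse semigroup (i.e., [p,q][r,r] = [r,r]) if and only if pk = r = qk. -/

import Mathlib

/-- The principal right ideal `pP` of a monoid. -/
def rI {M : Type*} [Monoid M] (p : M) : Set M := {x | ∃ y, x = p * y}

/-- A right LCM monoid: left cancellative, and any two principal right ideals are
either disjoint or intersect in another principal right ideal. -/
class RightLCM (M : Type*) extends Monoid M where
  mul_left_cancel' : ∀ a b c : M, a * b = a * c → b = c
  lcm : ∀ p q : M, rI p ∩ rI q = ∅ ∨ ∃ r : M, rI p ∩ rI q = rI r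

namespace RightLCM

variable {M : Type*} [RightLCM M]

/-- The equivalence relation `(p,q) ∼ (pu,qu)` for units `u`. -/
def peq (x y : M × M) : Prop := ∃ u : M, IsUnit u ∧ x.1 = y.1 * u ∧ x.2 = y.2 * u

theorem peq_equivalence : Equivalence (peq (M := M)) := by
  constructor
  · intro x; exact ⟨1, isUnit_one, by simp, by simp⟩
  · rintro x y ⟨u, hu, h1, h2⟩
    obtain ⟨w, hw⟩ := hu
    subst hw
    exact ⟨↑w⁻¹, Units.isUnit _, by rw [h1, mul_assoc, w.mul_inv, mul_one],
      by rw [h2, mul_assoc, w.mul_inv, mul_one]⟩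
  · rintro x y z ⟨u, hu, h1, h2⟩ ⟨v, hv, h3, h4⟩
    exact ⟨v * u, hv.mul hu, by rw [h1, h3, mul_assoc], by rw [h2, h4, mul_assoc]⟩

instance pSetoid : Setoid (M × M) := ⟨peq, peq_equivalence⟩

/-- The inverse semigroup `S = {[p,q] : p,q ∈ P} ∪ {0}` associated to a right LCM monoid. -/
abbrev S (M : Type*) [RightLCM M] := WithZero (Quotient (pSetoid (M := M)))

/-- The class `[p,q]` as an element of `S M`. -/
def cls (p q : M) : S M := (Quotient.mk (pSetoid (M := M)) (p, q) : Quotient (pSetoid (M := M)))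

open scoped Classical in
/-- Product of two representatives: `[a,b][c,d] = [ab', dc']` when `bP ∩ cP = rP` with
`bb' = cc' = r`, and `0` when `bP ∩ cP = ∅`. -/
noncomputable def mulPair (x y : M × M) : S M :=
  if h : rI x.2 ∩ rI y.1 = ∅ then 0
  else
    have hr := (RightLCM.lcm x.2 y.1).resolve_left h
    have hmem : Classical.choose hr ∈ rI x.2 ∩ rI y.1 :=
      (Set.ext_iff.mp (Classical.choose_spec hr) _).mpr ⟨1, (mul_one _).symm⟩
    cls (x.1 * Classical.choose hmem.1) (y.2 * Classical.choose hmem.2)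

/-- The multiplication on `S M` (with `0` absorbing). -/
noncomputable def smul : S M → S M → S M
  | none, _ => 0
  | some _, none => 0
  | some a, some b => mulPair a.out b.out

/-- The involution `[p,q]* = [q,p]` on `S M`. -/
noncomputable def star : S M → S M
  | none => 0
  | some a => cls a.out.2 a.out.1

end RightLCM

/-!
If `r = qk` then `rP ⊆ qP`, so `qP ∩ rP = rP` and the product is `[p,q][r,r] = [pk,r]`; this
needs only that the product does not depend on the chosen representatives or least common
multiple, which are all determined up to units. By left cancellation, `[pk,r] = [r,r]` forces
the unit relating the two pairs to be `1`, that is `pk = r`.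
-/

namespace RightLCM

variable {M : Type*} [RightLCM M]

instance : IsLeftCancelMul M := ⟨fun a _ _ => RightLCM.mul_left_cancel' a _ _⟩

lemma mem_rI {p x : M} : x ∈ rI p ↔ p ∣ x := Iff.rfl

lemma rI_mul_unit {u : M} (hu : IsUnit u) (x : M) : rI (x * u) = rI x :=
  Set.ext fun _ => hu.mul_right_dvd

lemma exists_unit_of_rI_eq {s t : M} (h : rI s = rI t) : ∃ u : Mˣ, s = t * u := by
  obtain ⟨y, hy⟩ : t ∣ s := mem_rI.mp (h ▸ dvd_rfl)
  obtain ⟨x, hx⟩ : s ∣ t := mem_rI.mp (h.symm ▸ dvd_rfl)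
  have hyx : y * x = 1 := mul_left_cancel (a := t) (by rw [← mul_assoc, ← hy, ← hx, mul_one])
  have hxy : x * y = 1 := mul_left_cancel (a := s) (by rw [← mul_assoc, ← hx, ← hy, mul_one])
  exact ⟨⟨y, x, hyx, hxy⟩, hy⟩

lemma cls_eq_iff {x y z w : M} :
    cls x y = cls z w ↔ ∃ u : M, IsUnit u ∧ x = z * u ∧ y = w * u := by
  rw [cls, cls, WithZero.coe_inj, Quotient.eq]
  rfl

lemma cls_mul_unit {u : M} (hu : IsUnit u) (x y : M) : cls (x * u) (y * u) = cls x y :=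
  cls_eq_iff.mpr ⟨u, hu, rfl, rfl⟩

lemma cls_left_inj {a b r : M} : cls a r = cls b r ↔ a = b := by
  refine ⟨fun h => ?_, fun h => h ▸ rfl⟩
  obtain ⟨u, -, ha, hr⟩ := cls_eq_iff.mp h
  rwa [(left_eq_mul.mp hr : u = 1), mul_one] at ha

lemma mulPair_spec (x y : M × M) (h : rI x.2 ∩ rI y.1 ≠ ∅) :
    ∃ b c, x.2 * b = y.1 * c ∧ rI x.2 ∩ rI y.1 = rI (x.2 * b) ∧
      mulPair x y = cls (x.1 * b) (y.2 * c) := by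
  rw [mulPair, dif_neg h]
  have hr := (RightLCM.lcm x.2 y.1).resolve_left h
  have hmem : Classical.choose hr ∈ rI x.2 ∩ rI y.1 :=
    (Set.ext_iff.mp (Classical.choose_spec hr) _).mpr ⟨1, (mul_one _).symm⟩
  refine ⟨Classical.choose hmem.1, Classical.choose hmem.2, ?_, ?_, rfl⟩
  · rw [← Classical.choose_spec hmem.1, ← Classical.choose_spec hmem.2]
  · rw [← Classical.choose_spec hmem.1]; exact Classical.choose_spec hr

lemma mulPair_eq_cls {x y : M × M} {b c : M} (hbc : x.2 * b = y.1 * c)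
    (hlcm : rI x.2 ∩ rI y.1 = rI (x.2 * b)) : mulPair x y = cls (x.1 * b) (y.2 * c) := by
  have hne : rI x.2 ∩ rI y.1 ≠ ∅ := hlcm ▸ Set.nonempty_iff_ne_empty.mp ⟨_, dvd_rfl⟩
  obtain ⟨b', c', hbc', hlcm', hmul⟩ := mulPair_spec x y hne
  obtain ⟨u, hu⟩ := exists_unit_of_rI_eq (hlcm'.symm.trans hlcm)
  have hb' : b' = b * u := mul_left_cancel (by rw [hu, mul_assoc])
  have hc' : c' = c * u := mul_left_cancel (by rw [← hbc', hu, hbc, mul_assoc])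
  rw [hmul, hb', hc', ← mul_assoc, ← mul_assoc]
  exact cls_mul_unit u.isUnit _ _

lemma smul_cls_cls {a b c d b' c' : M} (hbc : b * b' = c * c')
    (hlcm : rI b ∩ rI c = rI (b * b')) : smul (cls a b) (cls c d) = cls (a * b') (d * c') := by
  obtain ⟨_, ⟨u, rfl⟩, hx₁, hx₂⟩ : (Quotient.mk pSetoid (a, b)).out ≈ (a, b) := Quotient.mk_out _
  obtain ⟨_, ⟨v, rfl⟩, hy₁, hy₂⟩ : (Quotient.mk pSetoid (c, d)).out ≈ (c, d) := Quotient.mk_out _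
  have cancel (z w : M) {t : Mˣ} : z * t * (↑t⁻¹ * w) = z * w := by
    rw [mul_assoc, Units.mul_inv_cancel_left]
  change mulPair _ _ = _
  rw [mulPair_eq_cls (b := ↑u⁻¹ * b') (c := ↑v⁻¹ * c'), hx₁, hy₂, cancel, cancel]
  · rw [hx₂, hy₁, cancel, cancel, hbc]
  · rw [hx₂, hy₁, cancel, rI_mul_unit u.isUnit, rI_mul_unit v.isUnit, hlcm]

lemma smul_cls_cls_mul (p q k s : M) : smul (cls p q) (cls (q * k) s) = cls (p * k) s := by
  have hlcm : rI q ∩ rI (q * k) = rI (q * k) :=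
    Set.inter_eq_right.mpr fun _ => (dvd_mul_right q k).trans
  simpa only [mul_one] using smul_cls_cls (a := p) (d := s) (mul_one (q * k)).symm hlcm

end RightLCM

open RightLCM in
/-- For `r = qk`, the idempotent `[r,r]` is fixed by `[p,q]` iff `pk = r = qk`. -/
theorem stmt10 {M : Type*} [RightLCM M] (p q k r : M) (hr : r = q * k) :
    smul (cls p q) (cls r r) = cls r r ↔ (p * k = r ∧ q * k = r) := by
  subst hr
  rw [smul_cls_cls_mul, cls_left_inj, and_iff_left rfl]
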